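/- Let B be a bipartite graph with parts V₁ = {1,…,n} and V₂ = {v₁,…,v_m}, all of whose edges join V₁ to V₂, and for each k let N_k ⊆ V₁ be the neighborhood of v_k. Then vol(B) = Σ_{σ ∈ S_n} Π_{i=1}^{n} 1/(i + Σ_{j=1}^{i} α_{j,σ}), where for a permutation σ of {1,…,n}, α_{i,σ} is the number of vertices v_k ∈ V₂ such that σ(i) ∈ N_k but σ(j) ∉ N_k for all j < i. -/

import Mathlib

open MeasureTheory

/-- The graph polytope volume: `vol(G)` is the Lebesgue volume of
`{x ∈ [0,1]^V : x_i + x_j ≤ 1 for every edge ij of G}`. -/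
noncomputable def gvol {V : Type*} [Fintype V] (G : SimpleGraph V) : ℝ :=
  (volume {x : V → ℝ | (∀ i, x i ∈ Set.Icc (0:ℝ) 1) ∧
      ∀ ⦃i j⦄, G.Adj i j → x i + x j ≤ 1}).toReal

/-- The bipartite graph with parts `V₁ = Fin n` and `V₂ = Fin m`, where the
neighborhood of the vertex `v_k ∈ V₂` is `N k ⊆ V₁`. -/
def bipartiteOf {n m : ℕ} (N : Fin m → Finset (Fin n)) :
    SimpleGraph (Fin n ⊕ Fin m) where
  Adj x y :=
    match x, y with
    | Sum.inl i, Sum.inr k => i ∈ N k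
    | Sum.inr k, Sum.inl i => i ∈ N k
    | _, _ => False
  symm := ⟨by rintro (i | k) (i' | k') h <;> exact h⟩
  loopless := ⟨by rintro (i | k) h <;> exact h⟩

/-- `α_{i,σ}`: the number of vertices `v_k ∈ V₂` such that `σ(i) ∈ N k` but
`σ(j) ∉ N k` for all `j < i`. -/
def alphaCount {n m : ℕ} (N : Fin m → Finset (Fin n)) (σ : Equiv.Perm (Fin n))
    (i : Fin n) : ℕ :=
  (Finset.univ.filter fun k : Fin m => σ i ∈ N k ∧ ∀ j, j < i → σ j ∉ N k).card

/-!
Integrating out the `V₂`-coordinates first, and substituting `y = 1 - x` on `V₁`, the coordinate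
of `v_k` ranges over `[0, 1] ∩ lowerBounds (y '' N_k)`, so `vol(B)` is the integral over the cube
of `∏_k |[0, 1] ∩ lowerBounds (y '' N_k)|`. Almost every `y` has distinct coordinates, so the cube
splits into the regions where `u = y ∘ σ` is increasing. There the `k`-th factor is `u_i` for the
first position `i` with `σ i ∈ N_k`, so the integrand is `∏_i u_i ^ α_{i,σ}`. Integrating out the
largest coordinate each time, the integral of `∏_i u_i ^ a_i` over `0 ≤ u_0 < ⋯ < u_{n-1} < t`
is `t ^ d_{n-1} ∏_i 1 / d_i` with `d_i = ∑_{j ≤ i} (a_j + 1)`.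
-/

open Set
open scoped ENNReal

lemma volume_setOf_apply_eq_apply {ι : Type*} [Fintype ι] [DecidableEq ι] {i j : ι} (hij : i ≠ j) :
    volume {x : ι → ℝ | x i = x j} = 0 := by
  let φ : (ι → ℝ) →ₗ[ℝ] ℝ := (LinearMap.proj i : (ι → ℝ) →ₗ[ℝ] ℝ) - LinearMap.proj j
  have hker : {x : ι → ℝ | x i = x j} = LinearMap.ker φ := by
    ext x; simp [φ, sub_eq_zero]
  rw [hker]
  refine Measure.addHaar_submodule _ _ fun htop => ?_
  have h : (Pi.single i 1 : ι → ℝ) ∈ LinearMap.ker φ := htop ▸ Submodule.mem_top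
  simp [φ, hij.symm] at h

lemma ae_injective {ι : Type*} [Fintype ι] : ∀ᵐ x : ι → ℝ, Function.Injective x := by
  classical
  have hsub : {x : ι → ℝ | ¬Function.Injective x} ⊆ ⋃ (i) (j) (_ : i ≠ j), {x | x i = x j} := by
    intro x hx
    simp only [mem_ofPred_eq, Function.Injective, not_forall] at hx
    obtain ⟨i, j, hxij, hij⟩ := hx
    exact mem_iUnion₂.2 ⟨i, j, mem_iUnion.2 ⟨hij, hxij⟩⟩
  exact ae_iff.2 <| measure_mono_null hsub <| measure_iUnion_null fun i => measure_iUnion_null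
    fun j => measure_iUnion_null fun hij => volume_setOf_apply_eq_apply hij

lemma measurableSet_setOf_strictMono (n : ℕ) : MeasurableSet {u : Fin n → ℝ | StrictMono u} := by
  simp only [StrictMono, ofPred_forall]
  exact .iInter fun i => .iInter fun j => .iInter fun _ =>
    measurableSet_lt (measurable_pi_apply i) (measurable_pi_apply j)

lemma Equiv.Perm.eq_of_strictMono_comp {α : Type*} [Preorder α] {n : ℕ} {x : Fin n → α}
    {σ τ : Equiv.Perm (Fin n)} (hσ : StrictMono (x ∘ σ)) (hτ : StrictMono (x ∘ τ)) : σ = τ := by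
  have hx : Function.Injective x := by
    simpa [Function.comp_assoc] using hσ.injective.comp σ.symm.injective
  have hrange : range (x ∘ σ) = range (x ∘ τ) := by
    rw [range_comp, range_comp, σ.range_eq_univ, τ.range_eq_univ]
  exact Equiv.ext fun i => hx (congrFun ((hσ.range_inj hτ).1 hrange) i)

lemma Tuple.strictMono_comp_sort {α : Type*} [LinearOrder α] {n : ℕ} {x : Fin n → α}
    (hx : Function.Injective x) : StrictMono (x ∘ Tuple.sort x) :=
  (Tuple.monotone_sort x).strictMono_of_injective (hx.comp (Tuple.sort x).injective)

lemma setLIntegral_strictMono_comp (n : ℕ) (σ : Equiv.Perm (Fin n)) (f : (Fin n → ℝ) → ℝ≥0∞) :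
    ∫⁻ x in {x | StrictMono (x ∘ σ)}, f x = ∫⁻ u in {u | StrictMono u}, f (u ∘ σ.symm) := by
  let e := MeasurableEquiv.arrowCongr' σ (MeasurableEquiv.refl ℝ)
  have hmp : MeasurePreserving e := volume_preserving_arrowCongr' _ _ (MeasurePreserving.id _)
  have hpre : e ⁻¹' {x | StrictMono (x ∘ σ)} = {u | StrictMono u} := by
    have he : ∀ u, e u = u ∘ σ.symm := fun u => rfl
    ext u
    simp [he, Function.comp_assoc]
  rw [← hmp.setLIntegral_comp_preimage_emb e.measurableEmbedding, hpre]
  rfl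

theorem lintegral_eq_sum_perm (n : ℕ) (f : (Fin n → ℝ) → ℝ≥0∞) :
    ∫⁻ x, f x = ∑ σ : Equiv.Perm (Fin n), ∫⁻ u in {u | StrictMono u}, f (u ∘ σ.symm) := by
  have hcover : (univ : Set (Fin n → ℝ)) =ᵐ[volume]
      ⋃ σ : Equiv.Perm (Fin n), {x | StrictMono (x ∘ σ)} := by
    refine (ae_eq_univ.2 ?_).symm
    refine measure_mono_null (fun x hx => ?_) ae_injective
    simp only [mem_compl_iff, mem_iUnion, mem_ofPred_eq, not_exists] at hx
    exact fun hinj => hx _ (Tuple.strictMono_comp_sort hinj)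
  have hmeas : ∀ σ : Equiv.Perm (Fin n), MeasurableSet {x : Fin n → ℝ | StrictMono (x ∘ σ)} :=
    fun σ => measurableSet_setOf_strictMono n |>.preimage (by fun_prop)
  have hdisj : Pairwise (Function.onFun Disjoint
      fun σ : Equiv.Perm (Fin n) => {x : Fin n → ℝ | StrictMono (x ∘ σ)}) :=
    fun σ τ hne => disjoint_left.2 fun x hσ hτ => hne (Equiv.Perm.eq_of_strictMono_comp hσ hτ)
  rw [← setLIntegral_univ, setLIntegral_congr hcover, lintegral_iUnion hmeas hdisj, tsum_fintype]
  exact Finset.sum_congr rfl fun σ _ => setLIntegral_strictMono_comp n σ f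

/-- The upper bound is strict so that fixing the last coordinate `t` of a point of
`orderSimplex (n + 1) b` leaves the remaining coordinates in `orderSimplex n t`. -/
def orderSimplex (n : ℕ) (b : ℝ) : Set (Fin n → ℝ) :=
  univ.pi (fun _ => Ico 0 b) ∩ {u | StrictMono u}

lemma measurableSet_orderSimplex (n : ℕ) (b : ℝ) : MeasurableSet (orderSimplex n b) :=
  (MeasurableSet.univ_pi fun _ => measurableSet_Ico).inter (measurableSet_setOf_strictMono n)

lemma orderSimplex_zero (b : ℝ) : orderSimplex 0 b = univ :=
  eq_univ_of_forall fun _ => ⟨fun i => i.elim0, fun i => i.elim0⟩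

lemma Fin.strictMono_snoc_iff {α : Type*} [Preorder α] {n : ℕ} {w : Fin n → α} {t : α} :
    StrictMono (Fin.snoc w t : Fin (n + 1) → α) ↔ StrictMono w ∧ ∀ i, w i < t := by
  constructor
  · intro h
    refine ⟨fun i j hij => ?_, fun i => ?_⟩
    · simpa using h (Fin.castSucc_lt_castSucc_iff.2 hij)
    · simpa using h (Fin.castSucc_lt_last i)
  · rintro ⟨hw, ht⟩ i j hij
    induction j using Fin.lastCases with
    | last =>
      obtain ⟨i, rfl⟩ := Fin.exists_castSucc_eq.2 hij.ne
      simpa using ht i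
    | cast j =>
      obtain ⟨i, rfl⟩ := Fin.exists_castSucc_eq.2 (hij.trans (Fin.castSucc_lt_last j)).ne
      simpa using hw (Fin.castSucc_lt_castSucc_iff.1 hij)

lemma snoc_mem_orderSimplex_iff {n : ℕ} {b t : ℝ} {w : Fin n → ℝ} :
    (Fin.snoc w t : Fin (n + 1) → ℝ) ∈ orderSimplex (n + 1) b ↔
      t ∈ Ico 0 b ∧ w ∈ orderSimplex n t := by
  simp only [orderSimplex, mem_inter_iff, mem_univ_pi, mem_ofPred_eq, Fin.strictMono_snoc_iff,
    Fin.forall_fin_succ', Fin.snoc_castSucc, Fin.snoc_last, mem_Ico]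
  constructor
  · rintro ⟨⟨hwb, ht⟩, hw, hwt⟩
    exact ⟨ht, fun i => ⟨(hwb i).1, hwt i⟩, hw⟩
  · rintro ⟨ht, hwt, hw⟩
    exact ⟨⟨fun i => ⟨(hwt i).1, (hwt i).2.trans ht.2⟩, ht⟩, hw, fun i => (hwt i).2⟩

lemma lintegral_orderSimplex_succ {n : ℕ} (b : ℝ) {f : (Fin (n + 1) → ℝ) → ℝ≥0∞}
    (hf : Measurable f) :
    ∫⁻ u in orderSimplex (n + 1) b, f u =
      ∫⁻ t in Ico 0 b, ∫⁻ w in orderSimplex n t, f (Fin.snoc w t) := by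
  set e := MeasurableEquiv.piFinSuccAbove (fun _ : Fin (n + 1) => ℝ) (Fin.last n)
  have he : ⇑e.symm = fun p : ℝ × (Fin n → ℝ) => (Fin.snoc p.2 p.1 : Fin (n + 1) → ℝ) := by
    ext p; simp [e]
  have hmp : MeasurePreserving e.symm (volume.prod volume) volume :=
    (volume_preserving_piFinSuccAbove (fun _ => ℝ) (Fin.last n)).symm
  have hS := e.symm.measurable (measurableSet_orderSimplex (n + 1) b)
  have hfe := hf.comp e.symm.measurable
  rw [he] at hS hfe
  rw [← hmp.setLIntegral_comp_preimage_emb e.symm.measurableEmbedding, he,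
    ← lintegral_indicator hS, lintegral_prod _ (by exact (hfe.indicator hS).aemeasurable),
    ← lintegral_indicator measurableSet_Ico]
  refine lintegral_congr fun t => ?_
  by_cases ht : t ∈ Ico 0 b
  · rw [indicator_of_mem ht, ← lintegral_indicator (measurableSet_orderSimplex n t)]
    refine lintegral_congr fun w => ?_
    simp only [indicator]
    split_ifs with h1 h2 h2
    · rfl
    · exact absurd (snoc_mem_orderSimplex_iff.1 h1).2 h2
    · exact absurd (snoc_mem_orderSimplex_iff.2 ⟨ht, h2⟩) h1
    · rfl
  · rw [indicator_of_notMem ht]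
    refine (lintegral_congr fun w => ?_).trans lintegral_zero
    simp only [indicator]
    exact if_neg fun h => ht (snoc_mem_orderSimplex_iff.1 h).1

lemma lintegral_Ico_zero_ofReal_pow (b : ℝ) (k : ℕ) :
    ∫⁻ t in Ico 0 b, ENNReal.ofReal t ^ k = ENNReal.ofReal b ^ (k + 1) / (k + 1) := by
  rcases le_or_gt b 0 with hb | hb
  · simp [Ico_eq_empty_of_le hb, ENNReal.ofReal_eq_zero.2 hb]
  have hint : IntegrableOn (fun t : ℝ => t ^ k) (Ico 0 b) :=
    (continuous_pow k).integrableOn_Icc.mono_set Ico_subset_Icc_self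
  have hnn : 0 ≤ᵐ[volume.restrict (Ico 0 b)] fun t : ℝ => t ^ k :=
    ae_restrict_of_forall_mem measurableSet_Ico fun t ht => pow_nonneg ht.1 k
  calc ∫⁻ t in Ico 0 b, ENNReal.ofReal t ^ k
      = ∫⁻ t in Ico 0 b, ENNReal.ofReal (t ^ k) :=
        setLIntegral_congr_fun measurableSet_Ico fun t ht => (ENNReal.ofReal_pow ht.1 k).symm
    _ = ENNReal.ofReal (∫ t in Ico 0 b, t ^ k) :=
        (ofReal_integral_eq_lintegral_ofReal hint hnn).symm
    _ = ENNReal.ofReal (b ^ (k + 1) / (k + 1)) := by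
        rw [integral_Ico_eq_integral_Ioo, ← integral_Ioc_eq_integral_Ioo,
          ← intervalIntegral.integral_of_le hb.le, integral_pow]
        simp
    _ = ENNReal.ofReal b ^ (k + 1) / (k + 1) := by
        rw [ENNReal.ofReal_div_of_pos (by positivity), ENNReal.ofReal_pow hb.le]
        norm_cast

theorem lintegral_orderSimplex_prod_pow (n : ℕ) (b : ℝ) (a : Fin n → ℕ) :
    ∫⁻ u in orderSimplex n b, ∏ i, ENNReal.ofReal (u i) ^ a i =
      ENNReal.ofReal b ^ (∑ i, (a i + 1)) *
        ∏ i, ((∑ j ∈ Finset.Iic i, (a j + 1) : ℕ) : ℝ≥0∞)⁻¹ := by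
  induction n generalizing b with
  | zero => simp [orderSimplex_zero, volume_pi]
  | succ n ih =>
    set C := ∏ i : Fin n, ((∑ j ∈ Finset.Iic i, (a j.castSucc + 1) : ℕ) : ℝ≥0∞)⁻¹
    have hsum : ∑ i, (a i + 1) = ∑ i : Fin n, (a i.castSucc + 1) + (a (Fin.last n) + 1) :=
      Fin.sum_univ_castSucc _
    rw [lintegral_orderSimplex_succ b (by fun_prop)]
    simp only [Fin.prod_univ_castSucc, Fin.snoc_castSucc, Fin.snoc_last]
    calc ∫⁻ t in Ico 0 b, ∫⁻ w in orderSimplex n t,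
          (∏ i : Fin n, ENNReal.ofReal (w i) ^ a i.castSucc) * ENNReal.ofReal t ^ a (Fin.last n)
        = ∫⁻ t in Ico 0 b,
            C * ENNReal.ofReal t ^ (∑ i : Fin n, (a i.castSucc + 1) + a (Fin.last n)) := by
          refine lintegral_congr fun t => ?_
          rw [lintegral_mul_const _ (by fun_prop), ih]
          ring
      _ = _ := by
          have hlast : Finset.Iic (Fin.last n) = Finset.univ := by ext; simp [Fin.le_last]
          have hC : ∏ i : Fin n, ((∑ j ∈ Finset.Iic i.castSucc, (a j + 1) : ℕ) : ℝ≥0∞)⁻¹ = C :=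
            Finset.prod_congr rfl fun i _ => by rw [Fin.sum_Iic_castSucc]
          rw [hC, hlast, hsum, lintegral_const_mul _ (by fun_prop), lintegral_Ico_zero_ofReal_pow,
            ENNReal.div_eq_inv_mul, ← Nat.cast_add_one, ← add_assoc]
          ring

lemma setLIntegral_pi_Ico_eq_sum_perm (n : ℕ) (b : ℝ) (f : (Fin n → ℝ) → ℝ≥0∞) :
    ∫⁻ y in univ.pi fun _ : Fin n => Ico 0 b, f y =
      ∑ σ : Equiv.Perm (Fin n), ∫⁻ u in orderSimplex n b, f (u ∘ σ.symm) := by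
  have hcube : MeasurableSet (univ.pi fun _ : Fin n => Ico 0 b) :=
    .univ_pi fun _ => measurableSet_Ico
  rw [← lintegral_indicator hcube, lintegral_eq_sum_perm]
  refine Finset.sum_congr rfl fun σ _ => ?_
  have hmem : ∀ u : Fin n → ℝ, u ∘ σ.symm ∈ univ.pi (fun _ => Ico 0 b) ↔
      u ∈ univ.pi (fun _ => Ico 0 b) := fun u => by
    simp only [mem_univ_pi, Function.comp_apply]
    exact (σ.forall_congr_left (p := fun i => u i ∈ Ico 0 b)).symm
  rw [orderSimplex, ← setLIntegral_indicator hcube]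
  refine lintegral_congr fun u => ?_
  by_cases hu : u ∈ univ.pi (fun _ => Ico 0 b)
  · rw [indicator_of_mem hu, indicator_of_mem ((hmem u).2 hu)]
  · rw [indicator_of_notMem hu, indicator_of_notMem (mt (hmem u).1 hu)]

open Classical in
lemma volume_Icc_inter_lowerBounds_image {ι : Type*} [Fintype ι] [LinearOrder ι] {u : ι → ℝ}
    (hu : Monotone u) (hu1 : ∀ i, u i ≤ 1) (s : Set ι) :
    volume (Icc 0 1 ∩ lowerBounds (u '' s)) =
      ∏ i, if IsLeast s i then ENNReal.ofReal (u i) else 1 := by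
  rcases s.eq_empty_or_nonempty with rfl | hs
  · simp [IsLeast]
  obtain ⟨i₀, hi₀⟩ : ∃ i₀, IsLeast s i₀ :=
    ⟨wellFounded_lt.min s hs, wellFounded_lt.min_mem s hs,
      fun j hj => not_lt.1 (wellFounded_lt.not_lt_min s hj)⟩
  have hset : Icc 0 1 ∩ lowerBounds (u '' s) = Icc 0 (u i₀) := by
    ext c
    simp only [mem_inter_iff, mem_Icc, mem_lowerBounds, forall_mem_image]
    exact ⟨fun ⟨⟨h0, _⟩, hc⟩ => ⟨h0, hc hi₀.1⟩,
      fun ⟨h0, hc⟩ => ⟨⟨h0, hc.trans (hu1 i₀)⟩, fun j hj => hc.trans (hu (hi₀.2 hj))⟩⟩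
  rw [hset, Real.volume_Icc, sub_zero,
    Fintype.prod_eq_single i₀ fun i hi => if_neg fun h => hi (h.unique hi₀), if_pos hi₀]

lemma alphaCount_eq_card_isLeast {n m : ℕ} (N : Fin m → Finset (Fin n)) (σ : Equiv.Perm (Fin n))
    (i : Fin n) [DecidablePred fun k => IsLeast (σ ⁻¹' N k) i] :
    alphaCount N σ i = (Finset.univ.filter fun k => IsLeast (σ ⁻¹' N k) i).card := by
  refine congrArg Finset.card (Finset.filter_congr fun k _ => ?_)
  simp only [IsLeast, mem_lowerBounds, mem_preimage, Finset.mem_coe]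
  exact and_congr_right fun _ => forall_congr' fun j => by rw [← not_lt]; exact imp_not_comm

lemma prod_volume_Icc_inter_lowerBounds {n m : ℕ} (N : Fin m → Finset (Fin n))
    (σ : Equiv.Perm (Fin n)) {u : Fin n → ℝ} (hu : u ∈ orderSimplex n 1) :
    ∏ k, volume (Icc 0 1 ∩ lowerBounds ((u ∘ σ.symm) '' N k)) =
      ∏ i, ENNReal.ofReal (u i) ^ alphaCount N σ i := by
  classical
  have hu1 : ∀ i, u i ≤ 1 := fun i => (hu.1 i (mem_univ i)).2.le
  simp_rw [image_comp, σ.image_symm_eq_preimage,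
    volume_Icc_inter_lowerBounds_image hu.2.monotone hu1, alphaCount_eq_card_isLeast]
  rw [Finset.prod_comm]
  exact Finset.prod_congr rfl fun i _ => by rw [← Finset.prod_const, Finset.prod_filter]

lemma volume_bipartiteOf_polytope {n m : ℕ} (N : Fin m → Finset (Fin n)) :
    volume {x : Fin n ⊕ Fin m → ℝ | (∀ i, x i ∈ Icc (0 : ℝ) 1) ∧
        ∀ ⦃i j⦄, (bipartiteOf N).Adj i j → x i + x j ≤ 1} =
      ∫⁻ y in univ.pi fun _ : Fin n => Ico (0 : ℝ) 1,
        ∏ k, volume (Icc 0 1 ∩ lowerBounds (y '' N k)) := by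
  let Φ : (Fin n ⊕ Fin m → ℝ) ≃ᵐ (Fin n → ℝ) × (Fin m → ℝ) :=
    (MeasurableEquiv.sumPiEquivProdPi _).trans
      ((MeasurableEquiv.subLeft 1).prodCongr (MeasurableEquiv.refl _))
  have hΦ : MeasurePreserving Φ volume (volume.prod volume) :=
    ((Measure.measurePreserving_sub_left volume 1).prod (MeasurePreserving.id volume)).comp
      (volume_measurePreserving_sumPiEquivProdPi _)
  let Q : Set ((Fin n → ℝ) × (Fin m → ℝ)) :=
    {p | (∀ i, p.1 i ∈ Icc 0 1) ∧ ∀ k, p.2 k ∈ Icc 0 1 ∩ lowerBounds (p.1 '' N k)}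
  have hQ : MeasurableSet Q := by
    simp only [Q, mem_Icc, mem_inter_iff, mem_lowerBounds, forall_mem_image, Finset.mem_coe]
    measurability
  have hP : {x : Fin n ⊕ Fin m → ℝ | (∀ i, x i ∈ Icc (0 : ℝ) 1) ∧
      ∀ ⦃i j⦄, (bipartiteOf N).Adj i j → x i + x j ≤ 1} = Φ ⁻¹' Q := by
    ext x
    have hΦx : Φ x = (fun i => 1 - x (Sum.inl i), fun k => x (Sum.inr k)) := rfl
    simp only [mem_preimage, hΦx, Q, mem_ofPred_eq, Sum.forall, mem_inter_iff, mem_lowerBounds,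
      forall_mem_image, Finset.mem_coe, bipartiteOf, mem_Icc, false_imp_iff, implies_true,
      true_and, and_true, sub_le_self_iff, le_sub_iff_add_le, zero_add]
    grind
  have hslice : ∀ y, volume (Prod.mk y ⁻¹' Q) = (univ.pi fun _ => Icc 0 1).indicator
      (fun y => ∏ k, volume (Icc 0 1 ∩ lowerBounds (y '' N k))) y := by
    intro y
    by_cases hy : y ∈ univ.pi fun _ => Icc (0 : ℝ) 1
    · have : Prod.mk y ⁻¹' Q = univ.pi fun k => Icc 0 1 ∩ lowerBounds (y '' N k) := by
        ext z
        simp only [mem_preimage, Q, mem_ofPred_eq, mem_pi, mem_univ, true_imp_iff] at hy ⊢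
        exact and_iff_right hy
      rw [this, volume_pi_pi, indicator_of_mem hy]
    · have : Prod.mk y ⁻¹' Q = ∅ := eq_empty_of_forall_notMem fun z hz => hy fun i _ => hz.1 i
      rw [this, measure_empty, indicator_of_notMem hy]
  rw [hP, hΦ.measure_preimage_equiv, Measure.prod_apply hQ, lintegral_congr hslice,
    lintegral_indicator (MeasurableSet.univ_pi fun _ => measurableSet_Icc)]
  exact setLIntegral_congr Measure.pi_Ico_ae_eq_pi_Icc.symm

lemma sum_Iic_add_one_ne_zero {n : ℕ} (a : Fin n → ℕ) (i : Fin n) :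
    ∑ j ∈ Finset.Iic i, (a j + 1) ≠ 0 :=
  (Finset.sum_pos (fun _ _ => Nat.succ_pos _) ⟨i, Finset.mem_Iic.2 le_rfl⟩).ne'

lemma toReal_prod_inv_sum_Iic {n : ℕ} (a : Fin n → ℕ) :
    (∏ i, ((∑ j ∈ Finset.Iic i, (a j + 1) : ℕ) : ℝ≥0∞)⁻¹).toReal =
      ∏ i : Fin n, (1 : ℝ) / (((i : ℕ) + 1 : ℕ) +
        ∑ j ∈ Finset.univ.filter (fun j : Fin n => j ≤ i), (a j : ℝ)) := by
  rw [ENNReal.toReal_prod]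
  refine Finset.prod_congr rfl fun i _ => ?_
  rw [ENNReal.toReal_inv, ENNReal.toReal_natCast, one_div, Finset.filter_ge_eq_Iic,
    Finset.sum_add_distrib, Finset.sum_const, Fin.card_Iic, smul_eq_mul, mul_one]
  push_cast
  ring

/-- The volume of the graph polytope of a bipartite graph `B`:
`vol(B) = Σ_{σ ∈ S_n} Π_{i=1}^n 1/(i + Σ_{j=1}^i α_{j,σ})`. -/
theorem vol_bipartite (n m : ℕ) (N : Fin m → Finset (Fin n)) :
    gvol (bipartiteOf N) =
      ∑ σ : Equiv.Perm (Fin n), ∏ i : Fin n,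
        (1 : ℝ) / (((i : ℕ) + 1 : ℕ) +
          ∑ j ∈ Finset.univ.filter (fun j : Fin n => j ≤ i),
            (alphaCount N σ j : ℝ)) := by
  have hσ : ∀ σ : Equiv.Perm (Fin n),
      ∫⁻ u in orderSimplex n 1, ∏ k, volume (Icc 0 1 ∩ lowerBounds ((u ∘ σ.symm) '' N k)) =
        ∏ i, ((∑ j ∈ Finset.Iic i, (alphaCount N σ j + 1) : ℕ) : ℝ≥0∞)⁻¹ := fun σ => by
    rw [setLIntegral_congr_fun (measurableSet_orderSimplex n 1)
      fun u hu => prod_volume_Icc_inter_lowerBounds N σ hu, lintegral_orderSimplex_prod_pow,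
      ENNReal.ofReal_one, one_pow, one_mul]
  rw [gvol, volume_bipartiteOf_polytope, setLIntegral_pi_Ico_eq_sum_perm,
    Finset.sum_congr rfl fun σ _ => hσ σ, ENNReal.toReal_sum fun σ _ => ENNReal.prod_ne_top
      fun i _ => ENNReal.inv_ne_top.2 (Nat.cast_ne_zero.2 (sum_Iic_add_one_ne_zero _ i))]
  exact Finset.sum_congr rfl fun σ _ => toReal_prod_inv_sum_Iic _
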